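/- Gödel–Gentzen negative translation for propositional logic, giving a translation of classical logic K into intuitionistic logic J: a propositional formula φ evaluates to ⊤ under every valuation of its atoms in every Boolean algebra if and only if its negative translation φᴺ evaluates to ⊤ under every valuation of its atoms in every Heyting algebra, where the translation is defined by pᴺ = ¬¬p for atoms p, ⊥ᴺ = ⊥, (φ ∧ ψ)ᴺ = φᴺ ∧ ψᴺ, (φ ∨ ψ)ᴺ = ¬(¬φᴺ ∧ ¬ψᴺ), and (φ → ψ)ᴺ = φᴺ → ψᴺ. -/

import Mathlib

/-- Propositional formulae over a set `A` of atoms, closed under the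
connectives ⊥, ∧, ∨, →. -/
inductive PropForm (A : Type) where
  | atom : A → PropForm A
  | bot : PropForm A
  | and : PropForm A → PropForm A → PropForm A
  | or : PropForm A → PropForm A → PropForm A
  | imp : PropForm A → PropForm A → PropForm A

/-- Negation `¬φ` abbreviates `φ → ⊥`. -/
def PropForm.neg {A : Type} (φ : PropForm A) : PropForm A := .imp φ .bot

/-- The Gödel–Gentzen negative translation: `pᴺ = ¬¬p` for atoms `p`, `⊥ᴺ = ⊥`,
`(φ ∧ ψ)ᴺ = φᴺ ∧ ψᴺ`, `(φ ∨ ψ)ᴺ = ¬(¬φᴺ ∧ ¬ψᴺ)`, and `(φ → ψ)ᴺ = φᴺ → ψᴺ`. -/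
def PropForm.ntrans {A : Type} : PropForm A → PropForm A
  | .atom a => (PropForm.atom a).neg.neg
  | .bot => .bot
  | .and φ ψ => .and φ.ntrans ψ.ntrans
  | .or φ ψ => (PropForm.and φ.ntrans.neg ψ.ntrans.neg).neg
  | .imp φ ψ => .imp φ.ntrans ψ.ntrans

/-- The evaluation of a formula in a Heyting algebra `H` under a valuation
`v : A → H` of its atoms: ⊥ is the bottom element, ∧ is meet, ∨ is join, and
→ is Heyting implication. -/
def PropForm.eval {A H : Type} [HeytingAlgebra H] (v : A → H) : PropForm A → H
  | .atom a => v a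
  | .bot => ⊥
  | .and φ ψ => φ.eval v ⊓ ψ.eval v
  | .or φ ψ => φ.eval v ⊔ ψ.eval v
  | .imp φ ψ => φ.eval v ⇨ ψ.eval v

/-!
In a Boolean algebra `¬¬a = a` and `¬(¬a ⊓ ¬b) = a ⊔ b`, so `φᴺ` and `φ` take the same value;
this gives the implication from right to left. Conversely, in a Heyting algebra `H` the value
of `φᴺ` is always a regular element (`¬¬a = a`), and it is the value of `φ` in the Boolean
algebra of regular elements of `H`, whose operations are those of `H` except that the join is
`¬¬(a ⊔ b) = ¬(¬a ⊓ ¬b)`. A classical tautology is `⊤` there, hence `φᴺ` is `⊤` in `H`.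
-/

namespace PropForm

variable {A H : Type} [HeytingAlgebra H]

@[simp]
theorem eval_neg (v : A → H) (φ : PropForm A) : φ.neg.eval v = (φ.eval v)ᶜ := by
  simp [neg, eval, himp_bot]

theorem eval_ntrans_eq_eval {B : Type} [BooleanAlgebra B] (v : A → B) (φ : PropForm A) :
    φ.ntrans.eval v = φ.eval v := by
  induction φ with
  | atom a => simp [ntrans, eval]
  | bot => rfl
  | and φ ψ ihφ ihψ => simp [ntrans, eval, ihφ, ihψ]
  | or φ ψ ihφ ihψ => simp [ntrans, eval, ihφ, ihψ, compl_inf]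
  | imp φ ψ ihφ ihψ => simp [ntrans, eval, ihφ, ihψ]

theorem eval_ntrans_eq_coe_eval_toRegular (v : A → H) (φ : PropForm A) :
    φ.ntrans.eval v = ((φ.eval (Heyting.Regular.toRegular ∘ v) : Heyting.Regular H) : H) := by
  induction φ with
  | atom a => simp [ntrans, eval]
  | bot => rfl
  | and φ ψ ihφ ihψ =>
    rw [ntrans, eval, eval, ihφ, ihψ]
    exact (Heyting.Regular.coe_inf _ _).symm
  | or φ ψ ihφ ihψ => simp [ntrans, eval, ihφ, ihψ, Heyting.Regular.coe_sup, compl_sup]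
  | imp φ ψ ihφ ihψ => simp [ntrans, eval, ihφ, ihψ]

end PropForm

/-- The Gödel–Gentzen negative translation translates classical logic into
intuitionistic logic: `φ` evaluates to ⊤ under every valuation in every Boolean
algebra iff its negative translation `φᴺ` evaluates to ⊤ under every valuation
in every Heyting algebra. -/
theorem godel_gentzen {A : Type} (φ : PropForm A) :
    (∀ (B : Type) [BooleanAlgebra B], ∀ v : A → B, φ.eval v = ⊤) ↔
    (∀ (H : Type) [HeytingAlgebra H], ∀ v : A → H, φ.ntrans.eval v = ⊤) := by
  constructor
  · intro hφ H _ v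
    rw [φ.eval_ntrans_eq_coe_eval_toRegular, hφ (Heyting.Regular H)]
    exact Heyting.Regular.coe_top
  · intro hφN B _ v
    rw [← φ.eval_ntrans_eq_eval v]
    exact hφN B v
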